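/- arXiv:1506.04532 — 5 statements merged into one kernel-verified Lean document; each statement's English description precedes it below -/
import Mathlib

section
/- Let f: Γ → Γ be a graph self-map with no contracted edges. Then the relation on edges at a common vertex, declaring e ~ e' iff some power of f maps e and e' to edge paths with a non-trivial common initial subpath, is an equivalence relation, and f is a gate structure morphism with respect to the resulting intrinsic gate structure G(f), with injective induced map on gates. -/
/-!
Common combinatorial framework for train tracks (Coulbois–Lustig,
"Long turns, INP's and index for free group automorphisms").

A graph is finite, with an involutive fixed-point-free edge reversal `bar`.
Edge paths are lists of oriented edges.  A graph map sends vertices to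
vertices and edges to edge paths (compatibly with reversal and initial
vertices).  Gate structures, legal paths, train track morphisms, long turns,
legalizing maps, the intrinsic gate structure, Whitehead graphs and
transition matrices are defined combinatorially below.
-/

structure TTGraph where
  V : Type
  E : Type
  decV : DecidableEq V
  decE : DecidableEq E
  fintV : Fintype V
  fintE : Fintype E
  init : E → V
  bar : E → E
  bar_bar : ∀ e, bar (bar e) = e
  bar_ne : ∀ e, bar e ≠ e

namespace TTGraph

variable (G : TTGraph)

/-- terminal vertex of an oriented edge -/
def ter (e : G.E) : G.V := G.init (G.bar e)

/-- `l` is an edge path: consecutive edges are concatenable -/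
def IsPath (l : List G.E) : Prop :=
  l.Chain' fun e e' => G.ter e = G.init e'

end TTGraph

/-- A graph map: vertices to vertices, edges to edge paths. -/
structure GraphMap (G G' : TTGraph) where
  vmap : G.V → G'.V
  emap : G.E → List G'.E
  emap_path : ∀ e, G'.IsPath (emap e)
  emap_bar : ∀ e, emap (G.bar e) = (emap e).reverse.map G'.bar
  emap_head : ∀ e d, (emap e).head? = some d → G'.init d = vmap (G.init e)

namespace GraphMap

variable {G G' : TTGraph}

/-- image of an edge path under a graph map -/
def mapPath (f : GraphMap G G') (l : List G.E) : List G'.E := l.flatMap f.emap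

/-- iterated image of an edge path under a graph self-map: `f^t` applied to `l` -/
def iterMap (f : GraphMap G G) (t : ℕ) : List G.E → List G.E := f.mapPath^[t]

end GraphMap

/-- `h` is the composition `g ∘ f` of graph maps. -/
def IsComp {G G' G'' : TTGraph} (h : GraphMap G G'') (g : GraphMap G' G'') (f : GraphMap G G') :
    Prop :=
  (∀ v, h.vmap v = g.vmap (f.vmap v)) ∧ ∀ e, h.emap e = (f.emap e).flatMap g.emap

/-- A gate structure: an equivalence relation on oriented edges, only relating
edges with a common initial vertex; classes are the gates. -/
structure GateStruct (G : TTGraph) where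
  rel : G.E → G.E → Prop
  refl : ∀ e, rel e e
  symm : ∀ {e e'}, rel e e' → rel e' e
  trans : ∀ {a b c}, rel a b → rel b c → rel a c
  same_init : ∀ {e e'}, rel e e' → G.init e = G.init e'

/-- A legal edge path: a path which never crosses an illegal turn
(the turn crossed between consecutive edges `e, e'` is `(bar e, e')`). -/
def Legal (G : TTGraph) (S : GateStruct G) (l : List G.E) : Prop :=
  G.IsPath l ∧ l.Chain' fun e e' => ¬ S.rel (G.bar e) e'

/-- A reduced edge path: no backtracking subpath. -/
def Reduced (G : TTGraph) (l : List G.E) : Prop :=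
  l.Chain' fun e e' => e' ≠ G.bar e

/-- Train track morphism: no contracted edges, legal paths map to legal paths. -/
def IsTT {G G' : TTGraph} (S : GateStruct G) (S' : GateStruct G') (f : GraphMap G G') : Prop :=
  (∀ e, f.emap e ≠ []) ∧ ∀ l, Legal G S l → Legal G' S' (f.mapPath l)

/-- Entry of the transition matrix: number of times `f(e)` crosses `e'` or its inverse. -/
def transEntry {G G' : TTGraph} (f : GraphMap G G') (e' : G'.E) (e : G.E) : ℕ :=
  letI := G'.decE
  (f.emap e).count e' + (f.emap e).count (G'.bar e')

/-- The transition matrix of a graph map, indexed by sections (orientations)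
`pos`, `pos'` of the unoriented edge sets. -/
def transMatrix {G G' : TTGraph} (f : GraphMap G G') (pos : G.E → Bool) (pos' : G'.E → Bool) :
    Matrix {e : G'.E // pos' e = true} {e : G.E // pos e = true} ℕ :=
  fun e' e => transEntry f e'.1 e.1

/-- A long turn: two non-trivial legal paths with common initial vertex and
distinct first edges. -/
def IsLongTurn (G : TTGraph) (S : GateStruct G) (γ γ' : List G.E) : Prop :=
  Legal G S γ ∧ Legal G S γ' ∧ γ ≠ [] ∧ γ' ≠ [] ∧
    ∀ d d', γ.head? = some d → γ'.head? = some d' → G.init d = G.init d' ∧ d ≠ d'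

/-- An illegal long turn: the two initial edges lie in the same gate. -/
def IllegalLT (G : TTGraph) (S : GateStruct G) (γ γ' : List G.E) : Prop :=
  IsLongTurn G S γ γ' ∧ ∃ d d', γ.head? = some d ∧ γ'.head? = some d' ∧ S.rel d d'

/-- The initial edges of the two paths lie in distinct gates (legal long turn condition). -/
def LegalHeads (G : TTGraph) (S : GateStruct G) (γ γ' : List G.E) : Prop :=
  ∀ d d', γ.head? = some d → γ'.head? = some d' → ¬ S.rel d d'

/-- `(δ, δ')` is the `F`-image of the long turn `(γ, γ')`: removing the maximal
common initial subpath `γ₀` of the two image paths leaves two non-trivial paths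
with distinct first edges.  When such `δ, δ'` exist the long turn is `F`-long. -/
def IsLTImageF {G G' : TTGraph} (F : List G.E → List G'.E) (γ γ' : List G.E)
    (δ δ' : List G'.E) : Prop :=
  ∃ γ₀ : List G'.E, F γ = γ₀ ++ δ ∧ F γ' = γ₀ ++ δ' ∧ δ ≠ [] ∧ δ' ≠ [] ∧ δ.head? ≠ δ'.head?

/-- A map of paths is legalizing: every illegal long turn which is `F`-long has
legal `F`-image. -/
def LegalizingF {G G' : TTGraph} (S : GateStruct G) (S' : GateStruct G')
    (F : List G.E → List G'.E) : Prop :=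
  ∀ γ γ' δ δ', IllegalLT G S γ γ' → IsLTImageF F γ γ' δ δ' → LegalHeads G' S' δ δ'

/-- `Cb` is a cancellation bound for `F`: for any long turn, any common initial
subpath of the two images has length at most `Cb`. -/
def CancelBoundF {G G' : TTGraph} (S : GateStruct G) (F : List G.E → List G'.E) (Cb : ℕ) : Prop :=
  ∀ γ γ', IsLongTurn G S γ γ' → ∀ p, p <+: F γ → p <+: F γ' → p.length ≤ Cb

/-- `F` is strongly `K`-expanding: every legal path of length at least `K` has
strictly longer image. -/
def StronglyExpandingF {G G' : TTGraph} (S : GateStruct G) (F : List G.E → List G'.E)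
    (K : ℕ) : Prop :=
  ∀ γ, Legal G S γ → K ≤ γ.length → γ.length + 1 ≤ (F γ).length

/-- The intrinsic gate relation of a self-map `f`: two edges at a common vertex
are related iff some positive power of `f` maps them to edge paths with a
non-trivial common initial subpath (i.e. with the same first edge). -/
def IntrinsicRel {G : TTGraph} (f : GraphMap G G) (e e' : G.E) : Prop :=
  G.init e = G.init e' ∧
    ∃ t, 1 ≤ t ∧ ∃ d, (f.iterMap t [e]).head? = some d ∧ (f.iterMap t [e']).head? = some d

/-- `f` is gate-stable with respect to `S`: it fixes every vertex and every gate. -/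
def GateStable {G : TTGraph} (S : GateStruct G) (f : GraphMap G G) : Prop :=
  (∀ v, f.vmap v = v) ∧ ∀ e d, (f.emap e).head? = some d → S.rel e d

/-- `f` is expanding: every edge eventually has image of combinatorial length ≥ 2. -/
def ExpandingTT {G : TTGraph} (f : GraphMap G G) : Prop :=
  ∀ e, ∃ t, 1 ≤ t ∧ 2 ≤ (f.iterMap t [e]).length

/-- One step of the induced map `f^{LT_C}` on long turns of branch length `C`:
take the `f`-image and truncate both branches to length `C`. -/
def LTCstep {G : TTGraph} (f : GraphMap G G) (C : ℕ) (p q : List G.E × List G.E) : Prop :=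
  ∃ δ δ', IsLTImageF f.mapPath p.1 p.2 δ δ' ∧
    q.1 <+: δ ∧ q.2 <+: δ' ∧ q.1.length = C ∧ q.2.length = C

/-- `f` possesses a periodic INP: combinatorially, there is an illegal long turn
`(γ, γ')` and `t ≥ 1` such that `f^t` maps each branch over itself after a common
cancelled initial piece `ρ` (the INP is the subpath of `γ̄ ∘ γ'` joining the two
resulting fixed points of `f^t`). -/
def HasPeriodicINP {G : TTGraph} (S : GateStruct G) (f : GraphMap G G) : Prop :=
  ∃ γ γ' ρ t, 1 ≤ t ∧ IllegalLT G S γ γ' ∧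
    (ρ ++ γ) <+: f.iterMap t γ ∧ (ρ ++ γ') <+: f.iterMap t γ'

/-- The path `l` crosses over the gate turn represented by the edges `(a, b)`:
it contains a subpath `ē·e'` with `e` in the gate of `a` and `e'` in the gate of
`b` (or vice versa). -/
def CrossesGT {G : TTGraph} (S : GateStruct G) (l : List G.E) (a b : G.E) : Prop :=
  ∃ x y, [x, y] <:+: l ∧
    ((S.rel (G.bar x) a ∧ S.rel y b) ∨ (S.rel (G.bar x) b ∧ S.rel y a))

/-- Edge of the gate-Whitehead-graph of `f` at `v`, between the gates of the
edges `a` and `b` at `v`: some `f^t(e)` (`t ≥ 1`) crosses over this gate turn. -/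
def WhEdge {G : TTGraph} (S : GateStruct G) (f : GraphMap G G) (v : G.V) (a b : G.E) : Prop :=
  G.init a = v ∧ G.init b = v ∧ ∃ t, 1 ≤ t ∧ ∃ e, CrossesGT S (f.iterMap t [e]) a b

/-- All gate-Whitehead-graphs of `f` are connected. -/
def WhConnected {G : TTGraph} (S : GateStruct G) (f : GraphMap G G) : Prop :=
  ∀ v a b, G.init a = v → G.init b = v →
    Relation.ReflTransGen (fun x y => S.rel x y ∨ WhEdge S f v x y) a b

/-- The path map obtained by composing a list of graph self-maps (applied left to right). -/
def compPathFun {G : TTGraph} (l : List (GraphMap G G)) : List G.E → List G.E :=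
  l.foldl (fun F m => m.mapPath ∘ F) id

/-!
The first edge of `f^t(e)` is `Df^t(e)`, so `e ~ e'` says that `e, e'` share an initial vertex
and that their `Df`-orbits eventually agree. Eventual agreement of orbits is an equivalence
relation, and shifting both orbits by one step does not change it, so `e ~ e'` iff
`Df e ~ Df e'`; sharing an initial vertex is preserved because `f` maps vertices to vertices.
-/

open Filter

namespace Function

variable {α : Type*} {g : α → α} {a b : α}

theorem iterate_eventuallyEq_of_eq {t : ℕ} (h : g^[t] a = g^[t] b) :
    (fun s ↦ g^[s] a) =ᶠ[atTop] fun s ↦ g^[s] b := by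
  filter_upwards [eventually_ge_atTop t] with s hs
  obtain ⟨k, rfl⟩ := Nat.exists_eq_add_of_le' hs
  rw [iterate_add_apply, iterate_add_apply, h]

theorem iterate_apply_eventuallyEq_iff :
    ((fun s ↦ g^[s] (g a)) =ᶠ[atTop] fun s ↦ g^[s] (g b)) ↔
      (fun s ↦ g^[s] a) =ᶠ[atTop] fun s ↦ g^[s] b := by
  conv_rhs => rw [EventuallyEq, ← map_add_atTop_eq_nat 1, eventually_map]
  simp only [EventuallyEq, iterate_succ_apply]

end Function

namespace GraphMap

variable {G G' : TTGraph}

theorem head?_mapPath (f : GraphMap G G') (hne : ∀ e, f.emap e ≠ []) {l : List G.E} {d : G.E}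
    (h : l.head? = some d) : (f.mapPath l).head? = (f.emap d).head? := by
  obtain ⟨l, rfl⟩ : ∃ l', l = d :: l' := by
    cases l <;> simp_all
  exact List.head?_append_of_ne_nil _ (hne d)

variable (f : GraphMap G G) (hne : ∀ e, f.emap e ≠ [])

def differential (e : G.E) : G.E := (f.emap e).head (hne e)

theorem head?_emap (e : G.E) : (f.emap e).head? = some (f.differential hne e) :=
  List.head?_eq_some_head (hne e)

theorem init_differential (e : G.E) :
    G.init (f.differential hne e) = f.vmap (G.init e) :=
  f.emap_head e _ (f.head?_emap hne e)

theorem head?_iterMap_singleton (t : ℕ) (e : G.E) :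
    (f.iterMap t [e]).head? = some ((f.differential hne)^[t] e) := by
  induction t with
  | zero => rfl
  | succ t ih =>
    rw [iterMap, Function.iterate_succ_apply', ← iterMap, f.head?_mapPath hne ih,
      head?_emap, Function.iterate_succ_apply']

end GraphMap

section IntrinsicRel

variable {G : TTGraph} (f : GraphMap G G)

theorem intrinsicRel_iff (hne : ∀ e, f.emap e ≠ []) {e e' : G.E} :
    IntrinsicRel f e e' ↔ G.init e = G.init e' ∧
      (fun t ↦ (f.differential hne)^[t] e) =ᶠ[atTop] fun t ↦ (f.differential hne)^[t] e' := by
  simp only [IntrinsicRel, GraphMap.head?_iterMap_singleton f hne, Option.some.injEq,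
    exists_eq_left']
  refine and_congr_right fun _ ↦ ⟨?_, fun h ↦ ?_⟩
  · rintro ⟨t, -, h⟩
    exact (Function.iterate_eventuallyEq_of_eq h).symm
  · obtain ⟨t, ht, h⟩ := ((eventually_ge_atTop 1).and h).exists
    exact ⟨t, ht, h.symm⟩

theorem equivalence_intrinsicRel (hne : ∀ e, f.emap e ≠ []) : Equivalence (IntrinsicRel f) where
  refl _ := (intrinsicRel_iff f hne).2 ⟨rfl, EventuallyEq.rfl⟩
  symm h := by
    obtain ⟨hv, h⟩ := (intrinsicRel_iff f hne).1 h
    exact (intrinsicRel_iff f hne).2 ⟨hv.symm, h.symm⟩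
  trans h₁ h₂ := by
    obtain ⟨hv₁, h₁⟩ := (intrinsicRel_iff f hne).1 h₁
    obtain ⟨hv₂, h₂⟩ := (intrinsicRel_iff f hne).1 h₂
    exact (intrinsicRel_iff f hne).2 ⟨hv₁.trans hv₂, h₁.trans h₂⟩

theorem intrinsicRel_differential_iff (hne : ∀ e, f.emap e ≠ []) {e e' : G.E}
    (hv : G.init e = G.init e') :
    IntrinsicRel f (f.differential hne e) (f.differential hne e') ↔ IntrinsicRel f e e' := by
  simp only [intrinsicRel_iff f hne, GraphMap.init_differential, hv, true_and]
  exact Function.iterate_apply_eventuallyEq_iff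

end IntrinsicRel

/-- for a graph self-map `f` with no contracted edges, the
intrinsic gate relation is an equivalence relation, and `f` is a gate structure
morphism with respect to it with injective induced map on gates (for edges
`e, e'` at a common vertex with `d, d'` the first edges of `f(e), f(e')`, one
has `e ~ e'` iff `d ~ d'`; `→` is well-definedness of the map on gates, `←` its
injectivity). -/
theorem intrinsic_gate_structure {G : TTGraph} (f : GraphMap G G)
    (hne : ∀ e, f.emap e ≠ []) :
    Equivalence (IntrinsicRel f) ∧
      (∀ e e' d d', G.init e = G.init e' →
        (f.emap e).head? = some d → (f.emap e').head? = some d' →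
        (IntrinsicRel f e e' ↔ IntrinsicRel f d d')) := by
  refine ⟨equivalence_intrinsicRel f hne, fun e e' d d' hv hd hd' ↦ ?_⟩
  rw [f.head?_emap hne, Option.some_inj] at hd hd'
  subst hd hd'
  exact (intrinsicRel_differential_iff f hne hv).symm
end

section
/- Let f: Γ → Γ' and g: Γ' → Γ'' be train track morphisms with the same gate structure on Γ'. A long turn (γ₁, γ₂) in Γ is (g∘f)-long if and only if (γ₁, γ₂) is f-long and its f-image long turn is g-long; in that case (g∘f)^{LT}(γ₁,γ₂) = g^{LT}(f^{LT}(γ₁,γ₂)). -/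
/-!
Image maps preserve concatenation, so `h(γ) = g(γ₀) g(δ)` when `f(γ) = γ₀ δ`; hence a common
initial subpath of `f(γ), f(γ')` contributes to that of `h(γ), h(γ')`, which gives the easy
direction. Conversely, write `f(γ), f(γ')` as `γ₀ δ`, `γ₀ δ'` with `γ₀` their maximal common
initial subpath. If `h(γ), h(γ')` diverge after `η₀`, then `g(γ₀)` is a prefix of `η₀`, so the
`h`-image branches are exactly what remains of `g(δ), g(δ')` after their common part; in
particular `δ, δ'` are non-trivial, and by maximality of `γ₀` they start with distinct edges.
-/

namespace List

variable {α β : Type*}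

/-- `IsLTImageF F γ γ' δ δ'` is, by definition, `DivergesInto (F γ) (F γ') δ δ'`. -/
def DivergesInto (x y δ δ' : List α) : Prop :=
  ∃ p, x = p ++ δ ∧ y = p ++ δ' ∧ δ ≠ [] ∧ δ' ≠ [] ∧ δ.head? ≠ δ'.head?

theorem exists_eq_append_eq_append_head?_ne : ∀ a b : List α,
    ∃ p u v, a = p ++ u ∧ b = p ++ v ∧ (u = [] ∨ v = [] ∨ u.head? ≠ v.head?)
  | [], b => ⟨[], [], b, rfl, rfl, .inl rfl⟩
  | a :: as, [] => ⟨[], a :: as, [], rfl, rfl, .inr (.inl rfl)⟩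
  | a :: as, b :: bs => by
    by_cases hab : a = b
    · obtain ⟨p, u, v, rfl, rfl, hdiv⟩ := exists_eq_append_eq_append_head?_ne as bs
      exact ⟨a :: p, u, v, rfl, by rw [hab]; rfl, hdiv⟩
    · exact ⟨[], a :: as, b :: bs, rfl, rfl, .inr (.inr (by simp [hab]))⟩

/-- A common prefix `x` of two lists that diverge right after `p` is a prefix of `p`. -/
theorem exists_eq_append_of_append_eq_append_of_head?_ne {x u v p ε ε' : List α}
    (hu : x ++ u = p ++ ε) (hv : x ++ v = p ++ ε') (hε : ε.head? ≠ ε'.head?) :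
    ∃ δ₀, u = δ₀ ++ ε ∧ v = δ₀ ++ ε' := by
  rcases append_eq_append_iff.mp hu with ⟨δ₀, rfl, rfl⟩ | ⟨r, rfl, rfl⟩
  · rw [append_assoc, append_cancel_left_eq] at hv
    exact ⟨δ₀, rfl, hv⟩
  · rw [append_assoc, append_cancel_left_eq] at hv
    subst hv
    cases r with
    | nil => exact ⟨[], rfl, rfl⟩
    | cons a r => simp at hε

variable {Φ : List α → List β} {x y δ δ' : List α} {ε ε' : List β}

theorem DivergesInto.map (hΦ : ∀ a b, Φ (a ++ b) = Φ a ++ Φ b)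
    (hδ : DivergesInto x y δ δ') (hε : DivergesInto (Φ δ) (Φ δ') ε ε') :
    DivergesInto (Φ x) (Φ y) ε ε' := by
  obtain ⟨p, rfl, rfl, -⟩ := hδ
  obtain ⟨q, hq, hq', hε⟩ := hε
  exact ⟨Φ p ++ q, by rw [hΦ, hq, append_assoc], by rw [hΦ, hq', append_assoc], hε⟩

theorem DivergesInto.exists_of_map (hΦ : ∀ a b, Φ (a ++ b) = Φ a ++ Φ b)
    (h : DivergesInto (Φ x) (Φ y) ε ε') :
    ∃ δ δ', DivergesInto x y δ δ' ∧ DivergesInto (Φ δ) (Φ δ') ε ε' := by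
  obtain ⟨q, hx, hy, hε, hε', hne⟩ := h
  obtain ⟨p, u, v, rfl, rfl, hdiv⟩ := exists_eq_append_eq_append_head?_ne x y
  rw [hΦ] at hx hy
  obtain ⟨r, hΦu, hΦv⟩ := exists_eq_append_of_append_eq_append_of_head?_ne hx hy hne
  have hΦnil : Φ [] = [] := by simpa using hΦ [] []
  have hu : u ≠ [] := by rintro rfl; simp_all
  have hv : v ≠ [] := by rintro rfl; simp_all
  have huv : u.head? ≠ v.head? := by tauto
  exact ⟨u, v, ⟨p, rfl, rfl, hu, hv, huv⟩, r, hΦu, hΦv, hε, hε', hne⟩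

end List

theorem GraphMap.mapPath_append {G G' : TTGraph} (f : GraphMap G G') (a b : List G.E) :
    f.mapPath (a ++ b) = f.mapPath a ++ f.mapPath b :=
  List.flatMap_append

theorem IsComp.mapPath_eq {G G' G'' : TTGraph} {h : GraphMap G G''} {g : GraphMap G' G''}
    {f : GraphMap G G'} (hcomp : IsComp h g f) (l : List G.E) :
    h.mapPath l = g.mapPath (f.mapPath l) := by
  simp only [GraphMap.mapPath, List.flatMap_assoc]
  exact List.flatMap_congr fun e _ => hcomp.2 e

theorem longturn_image_comp_general {G G' G'' : TTGraph} (f : GraphMap G G')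
    (g : GraphMap G' G'') (h : GraphMap G G'')
    (hcomp : IsComp h g f)
    (γ γ' : List G.E) :
    ((∃ δ δ', IsLTImageF h.mapPath γ γ' δ δ') ↔
      (∃ δ δ', IsLTImageF f.mapPath γ γ' δ δ' ∧
        ∃ ε ε', IsLTImageF g.mapPath δ δ' ε ε')) ∧
    (∀ δ δ' ε ε', IsLTImageF f.mapPath γ γ' δ δ' →
      IsLTImageF g.mapPath δ δ' ε ε' → IsLTImageF h.mapPath γ γ' ε ε') := by
  rw [funext hcomp.mapPath_eq]
  refine ⟨⟨fun ⟨_, _, hε⟩ => ?_, fun ⟨δ, δ', hδ, ε, ε', hε⟩ => ⟨ε, ε', ?_⟩⟩,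
    fun _ _ _ _ hδ hε => ?_⟩
  · obtain ⟨δ, δ', hδ, hε⟩ := List.DivergesInto.exists_of_map g.mapPath_append hε
    exact ⟨δ, δ', hδ, _, _, hε⟩
  · exact List.DivergesInto.map g.mapPath_append hδ hε
  · exact List.DivergesInto.map g.mapPath_append hδ hε

/-- for train track morphisms `f, g` (same gate structure on the
middle graph) and `h = g ∘ f`, a long turn is `h`-long iff it is `f`-long with
`g`-long `f`-image; in that case `h^{LT} = g^{LT} ∘ f^{LT}`. -/
theorem longturn_image_comp {G G' G'' : TTGraph} (S : GateStruct G)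
    (S' : GateStruct G') (S'' : GateStruct G'') (f : GraphMap G G')
    (g : GraphMap G' G'') (h : GraphMap G G'')
    (hf : IsTT S S' f) (hg : IsTT S' S'' g) (hcomp : IsComp h g f)
    (γ γ' : List G.E) (hLT : IsLongTurn G S γ γ') :
    ((∃ δ δ', IsLTImageF h.mapPath γ γ' δ δ') ↔
      (∃ δ δ', IsLTImageF f.mapPath γ γ' δ δ' ∧
        ∃ ε ε', IsLTImageF g.mapPath δ δ' ε ε')) ∧
    (∀ δ δ' ε ε', IsLTImageF f.mapPath γ γ' δ δ' →
      IsLTImageF g.mapPath δ δ' ε ε' → IsLTImageF h.mapPath γ γ' ε ε') :=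
  longturn_image_comp_general f g h hcomp γ γ'
end

section
/- Every expanding train track morphism f: Γ → Γ on a finite graph has a positive power f^m that is strongly 1-expanding, i.e., |f^m(γ)| ≥ |γ| + 1 for every non-trivial legal edge path γ. -/
/-!
No edge is contracted, so iterating `f` never shortens a path, and the image of a path is the
concatenation of the images of its edges. Taking `m` at least every edge's expansion time, each
edge has `f^m`-image of length at least `2`, so a non-trivial path gains at least one edge.
-/

namespace GraphMap

variable {G G' : TTGraph}

theorem mapPath_append_s13 (f : GraphMap G G') (a b : List G.E) :
    f.mapPath (a ++ b) = f.mapPath a ++ f.mapPath b :=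
  List.flatMap_append

theorem length_le_length_mapPath (f : GraphMap G G') (hne : ∀ e, f.emap e ≠ [])
    (l : List G.E) : l.length ≤ (f.mapPath l).length := by
  induction l with
  | nil => simp [mapPath]
  | cons e l ih =>
    have : 1 ≤ (f.emap e).length := List.length_pos_iff.mpr (hne e)
    simp only [mapPath, List.flatMap_cons, List.length_append, List.length_cons] at ih ⊢
    omega

theorem iterMap_add (f : GraphMap G G) (a b : ℕ) (l : List G.E) :
    f.iterMap (a + b) l = f.iterMap a (f.iterMap b l) :=
  Function.iterate_add_apply _ _ _ _

theorem iterMap_append (f : GraphMap G G) (k : ℕ) (a b : List G.E) :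
    f.iterMap k (a ++ b) = f.iterMap k a ++ f.iterMap k b := by
  induction k generalizing a b with
  | zero => rfl
  | succ k ih =>
    rw [iterMap_add f k 1, iterMap_add f k 1, iterMap_add f k 1]
    exact (congrArg _ (mapPath_append_s13 f a b)).trans (ih _ _)

theorem length_le_length_iterMap (f : GraphMap G G) (hne : ∀ e, f.emap e ≠ [])
    (k : ℕ) (l : List G.E) : l.length ≤ (f.iterMap k l).length := by
  induction k generalizing l with
  | zero => rfl
  | succ k ih =>
    rw [iterMap_add f k 1]
    exact (length_le_length_mapPath f hne l).trans (ih _)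

theorem length_iterMap_mono (f : GraphMap G G) (hne : ∀ e, f.emap e ≠ [])
    {k n : ℕ} (hkn : k ≤ n) (l : List G.E) :
    (f.iterMap k l).length ≤ (f.iterMap n l).length := by
  obtain ⟨j, rfl⟩ := Nat.exists_eq_add_of_le' hkn
  rw [iterMap_add]
  exact length_le_length_iterMap f hne j _

end GraphMap

theorem ExpandingTT.exists_uniform_exponent {G : TTGraph} {f : GraphMap G G}
    (hexp : ExpandingTT f) (hne : ∀ e, f.emap e ≠ []) :
    ∃ m, 1 ≤ m ∧ ∀ e, 2 ≤ (f.iterMap m [e]).length := by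
  choose t _ ht using hexp
  have := G.fintE
  refine ⟨max 1 (Finset.univ.sup t), le_max_left _ _, fun e => ?_⟩
  have hte : t e ≤ max 1 (Finset.univ.sup t) :=
    le_max_of_le_right (Finset.le_sup (Finset.mem_univ e))
  exact (ht e).trans (GraphMap.length_iterMap_mono f hne hte [e])

/-- every expanding train track self-morphism of a finite graph
has a positive power `f^m` which is strongly 1-expanding:
`|f^m(γ)| ≥ |γ| + 1` for every non-trivial legal edge path `γ`. -/
theorem expanding_power_strongly_one_expanding {G : TTGraph} (S : GateStruct G)
    (f : GraphMap G G) (hTT : IsTT S S f) (hexp : ExpandingTT f) :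
    ∃ m, 1 ≤ m ∧ ∀ γ, Legal G S γ → γ ≠ [] →
      γ.length + 1 ≤ (f.iterMap m γ).length := by
  obtain ⟨m, hm, hedge⟩ := ExpandingTT.exists_uniform_exponent hexp hTT.1
  refine ⟨m, hm, fun γ _ hγ => ?_⟩
  obtain ⟨e, rest, rfl⟩ := List.exists_cons_of_ne_nil hγ
  calc (e :: rest).length + 1 = 2 + rest.length := by
        rw [List.length_cons]; omega
    _ ≤ (f.iterMap m [e]).length + (f.iterMap m rest).length :=
        add_le_add (hedge e) (GraphMap.length_le_length_iterMap f hTT.1 m rest)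
    _ = (f.iterMap m (e :: rest)).length := by
        rw [← List.length_append, ← GraphMap.iterMap_append, List.singleton_append]
end

section
/- Let f: Γ → Γ be a train track map with cancellation bound C(f) which is strongly K-expanding. Set C(f)⁺ = max(K, C(f)/(λ − 1)) where λ = λ^K_min(f) > 1 is the minimal stretching factor for legal paths of length ≥ K. Then for every integer C ≥ C(f)⁺, every long turn with both branches of length C is f-long, its f-image has both branches of length ≥ C, and hence truncation to length C yields a well-defined map f^{LT_C} from LT_C(Γ) to itself. -/
/-!
A branch of length `C ≥ K` is stretched by `f` to length at least `λC ≥ C + C(f)`, while at most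
`C(f)` of its image cancels against the image of the other branch; so after removing the maximal
common prefix both image branches are non-trivial, of length at least `C`, and start differently.
-/

theorem List.exists_append_append_head?_ne {α : Type*} :
    ∀ l m : List α, ∃ p s t, l = p ++ s ∧ m = p ++ t ∧ ∀ a, s.head? = some a → t.head? ≠ some a
  | a :: l, b :: m => by
    by_cases hab : a = b
    · obtain ⟨p, s, t, rfl, rfl, hst⟩ := exists_append_append_head?_ne l m
      exact ⟨a :: p, s, t, rfl, hab ▸ rfl, hst⟩
    · exact ⟨[], a :: l, b :: m, rfl, rfl, by simp [Ne.symm hab]⟩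
  | [], m => ⟨[], [], m, rfl, rfl, by simp⟩
  | l, [] => ⟨[], l, [], rfl, rfl, by simp⟩

theorem exists_isLTImageF_of_add_le_length {G G' : TTGraph} {F : List G.E → List G'.E}
    {γ γ' : List G.E} {Cf C : ℕ}
    (hcancel : ∀ p, p <+: F γ → p <+: F γ' → p.length ≤ Cf)
    (hlen : C + Cf ≤ (F γ).length) (hlen' : C + Cf ≤ (F γ').length) (hC : 0 < C) :
    ∃ δ δ', IsLTImageF F γ γ' δ δ' ∧ C ≤ δ.length ∧ C ≤ δ'.length := by
  obtain ⟨p, δ, δ', hδ, hδ', hhead⟩ := (F γ).exists_append_append_head?_ne (F γ')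
  have hp : p.length ≤ Cf :=
    hcancel p (hδ ▸ List.prefix_append p δ) (hδ' ▸ List.prefix_append p δ')
  have hCδ : C ≤ δ.length := by
    have := congrArg List.length hδ
    rw [List.length_append] at this
    omega
  have hCδ' : C ≤ δ'.length := by
    have := congrArg List.length hδ'
    rw [List.length_append] at this
    omega
  obtain ⟨a, s, rfl⟩ := List.exists_cons_of_length_pos (by omega : 0 < δ.length)
  exact ⟨a :: s, δ', ⟨p, hδ, hδ', List.cons_ne_nil a s, List.ne_nil_of_length_pos (by omega),
    fun h => hhead a rfl h.symm⟩, hCδ, hCδ'⟩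

theorem add_le_of_div_sub_one_le_of_mul_le {lam c x y : ℝ} (hlam : 1 < lam)
    (hc : c / (lam - 1) ≤ x) (hy : lam * x ≤ y) : x + c ≤ y := by
  have : c ≤ x * (lam - 1) := (div_le_iff₀ (by linarith)).mp hc
  linarith

theorem longturn_map_well_defined_general {G : TTGraph} (S : GateStruct G)
    (f : GraphMap G G) (Cf K : ℕ)
    (hCb : CancelBoundF S f.mapPath Cf)
    (lam : ℝ) (hlam : 1 < lam)
    (hmin : ∀ γ, Legal G S γ → K ≤ γ.length →
      lam * (γ.length : ℝ) ≤ ((f.mapPath γ).length : ℝ))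
    (C : ℕ) (hCK : (K : ℝ) ≤ (C : ℝ)) (hCC : (Cf : ℝ) / (lam - 1) ≤ (C : ℝ)) :
    ∀ γ γ', IsLongTurn G S γ γ' → γ.length = C → γ'.length = C →
      ∃ δ δ', IsLTImageF f.mapPath γ γ' δ δ' ∧ C ≤ δ.length ∧ C ≤ δ'.length := by
  intro γ γ' hLT hγ hγ'
  have hstretch : ∀ η, Legal G S η → η.length = C → C + Cf ≤ (f.mapPath η).length := by
    intro η hη rfl
    have := hmin η hη (by exact_mod_cast hCK)
    exact_mod_cast add_le_of_div_sub_one_le_of_mul_le hlam hCC this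
  exact exists_isLTImageF_of_add_le_length (hCb γ γ' hLT) (hstretch γ hLT.1 hγ)
    (hstretch γ' hLT.2.1 hγ') (hγ ▸ List.length_pos_of_ne_nil hLT.2.2.1)

/-- for a train track map `f` with cancellation bound `Cf`, strongly
`K`-expanding with minimal stretching factor `lam > 1` on legal paths of length
`≥ K`, and any integer `C ≥ C(f)⁺ = max(K, Cf/(lam−1))`, every long turn with
branches of length `C` is `f`-long with `f`-image branches of length `≥ C`;
hence truncation to length `C` yields a well-defined map `f^{LT_C}` on `LT_C(Γ)`. -/
theorem longturn_map_well_defined {G : TTGraph} (S : GateStruct G)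
    (f : GraphMap G G) (hTT : IsTT S S f) (Cf K : ℕ) (hK : 1 ≤ K)
    (hCb : CancelBoundF S f.mapPath Cf)
    (hexp : StronglyExpandingF S f.mapPath K)
    (lam : ℝ) (hlam : 1 < lam)
    (hmin : ∀ γ, Legal G S γ → K ≤ γ.length →
      lam * (γ.length : ℝ) ≤ ((f.mapPath γ).length : ℝ))
    (C : ℕ) (hCK : (K : ℝ) ≤ (C : ℝ)) (hCC : (Cf : ℝ) / (lam - 1) ≤ (C : ℝ)) :
    ∀ γ γ', IsLongTurn G S γ γ' → γ.length = C → γ'.length = C →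
      ∃ δ δ', IsLTImageF f.mapPath γ γ' δ δ' ∧ C ≤ δ.length ∧ C ≤ δ'.length :=
  longturn_map_well_defined_general S f Cf K hCb lam hlam hmin C hCK hCC
end

section
/- Let f: Γ → Γ be an expanding train track map representing an automorphism of F_N (so f is a homotopy equivalence with a cancellation bound). Then exactly one of the following holds: (a) f possesses a periodic INP, or (b) there exists k₀ such that for all k ≥ k₀ the map f^k is legalizing with respect to the intrinsic gate structure G(f). -/
/-!
A periodic INP `(γ, γ')` reappears, after a cancelled piece, at the start of its own
`f^t`-image. Hence for every multiple `k` of `t` the `f^k`-image of this illegal long turn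
begins with `γ` and `γ'` again and is still illegal, so `f^k` is not legalizing.

Conversely, follow the `f^k`-images of an illegal long turn. For the intrinsic gate structure,
branches that start in distinct gates keep doing so, so it suffices to see that the images cannot
stay illegal for too long. Choose `T` such that `f^T` doubles lengths, and let `L` be a
cancellation bound for `f^T`. Truncated to length `L + 1`, each image at a stage `j * T` is
mapped over the next one by `f^T`, and the truncated long turns form a finite set. Hence two of
them coincide, and the first is a periodic INP.
-/

namespace List

variable {α : Type*}

theorem length_le_add_of_prefix_append {p P u v : List α} {c : ℕ} (hu : p <+: P ++ u)
    (hv : p <+: P ++ v) (huv : ∀ q, q <+: u → q <+: v → q.length ≤ c) :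
    p.length ≤ P.length + c := by
  rcases le_total p.length P.length with hle | hle
  · omega
  · obtain ⟨q, rfl⟩ := prefix_of_prefix_length_le (prefix_append P u) hu hle
    rw [length_append]
    have := huv q ((prefix_append_right_inj P).mp hu) ((prefix_append_right_inj P).mp hv)
    omega

theorem head?_take_succ (n : ℕ) (l : List α) : (l.take (n + 1)).head? = l.head? := by
  cases l <;> rfl

variable [DecidableEq α]

def stripCommonPrefix : List α → List α → List α × List α
  | a :: x, b :: y => if a = b then stripCommonPrefix x y else (a :: x, b :: y)
  | [], y => ([], y)
  | a :: x, [] => (a :: x, [])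

@[simp]
theorem stripCommonPrefix_nil_left (y : List α) : stripCommonPrefix [] y = ([], y) := by
  cases y <;> rfl

@[simp]
theorem stripCommonPrefix_nil_right (x : List α) : stripCommonPrefix x [] = (x, []) := by
  cases x <;> rfl

theorem stripCommonPrefix_spec : ∀ x y : List α,
    ∃ p, x = p ++ (stripCommonPrefix x y).1 ∧ y = p ++ (stripCommonPrefix x y).2
  | a :: x, b :: y => by
    by_cases h : a = b
    · obtain ⟨p, hx, hy⟩ := stripCommonPrefix_spec x y
      subst h
      exact ⟨a :: p, by simp [stripCommonPrefix, ← hx, ← hy]⟩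
    · exact ⟨[], by simp [stripCommonPrefix, h]⟩
  | [], y => ⟨[], by simp⟩
  | a :: x, [] => ⟨[], by simp⟩

theorem head?_stripCommonPrefix_ne : ∀ {x y : List α}, (stripCommonPrefix x y).1 ≠ [] →
    (stripCommonPrefix x y).1.head? ≠ (stripCommonPrefix x y).2.head?
  | a :: x, b :: y, h => by
    by_cases hab : a = b
    · simp only [stripCommonPrefix, hab, if_true] at h ⊢
      exact head?_stripCommonPrefix_ne h
    · simp [stripCommonPrefix, hab]
  | [], y, h => by simp at h
  | a :: x, [], _ => by simp

theorem stripCommonPrefix_of_head?_ne {x y : List α} (h : x.head? ≠ y.head?) :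
    stripCommonPrefix x y = (x, y) := by
  rcases x with _ | ⟨a, x⟩ <;> rcases y with _ | ⟨b, y⟩
  all_goals simp_all [stripCommonPrefix]

@[simp]
theorem stripCommonPrefix_append_append (p x y : List α) :
    stripCommonPrefix (p ++ x) (p ++ y) = stripCommonPrefix x y := by
  induction p with
  | nil => rfl
  | cons a p ih => simp [stripCommonPrefix, ih]

end List

namespace GraphMap

variable {G : TTGraph} (f : GraphMap G G)

@[simp]
theorem mapPath_nil : f.mapPath [] = [] := rfl

@[simp]
theorem mapPath_singleton (e : G.E) : f.mapPath [e] = f.emap e := by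
  simp [mapPath]

theorem mapPath_cons (e : G.E) (l : List G.E) : f.mapPath (e :: l) = f.emap e ++ f.mapPath l :=
  List.flatMap_cons ..

theorem mapPath_append_s16 (x y : List G.E) : f.mapPath (x ++ y) = f.mapPath x ++ f.mapPath y :=
  List.flatMap_append ..

theorem iterMap_succ (t : ℕ) (l : List G.E) :
    f.iterMap (t + 1) l = f.iterMap t (f.mapPath l) :=
  Function.iterate_succ_apply ..

theorem iterMap_succ' (t : ℕ) (l : List G.E) :
    f.iterMap (t + 1) l = f.mapPath (f.iterMap t l) :=
  Function.iterate_succ_apply' ..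

theorem iterMap_add_s16 (m n : ℕ) (l : List G.E) :
    f.iterMap (m + n) l = f.iterMap m (f.iterMap n l) :=
  Function.iterate_add_apply ..

@[simp]
theorem iterMap_zero (l : List G.E) : f.iterMap 0 l = l := rfl

@[simp]
theorem iterMap_nil (t : ℕ) : f.iterMap t [] = [] :=
  Function.iterate_fixed rfl t

theorem iterMap_append_s16 (t : ℕ) (x y : List G.E) :
    f.iterMap t (x ++ y) = f.iterMap t x ++ f.iterMap t y := by
  induction t generalizing x y with
  | zero => rfl
  | succ t ih => simp only [iterMap_succ, mapPath_append_s16, ih]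

theorem length_le_iterMap (hne : ∀ e, f.emap e ≠ []) (t : ℕ) (l : List G.E) :
    l.length ≤ (f.iterMap t l).length := by
  induction t generalizing l with
  | zero => rfl
  | succ t ih =>
    rw [iterMap_succ]
    refine le_trans ?_ (ih _)
    induction l with
    | nil => simp
    | cons e l ihl =>
      have := List.length_pos_iff.mpr (hne e)
      rw [mapPath_cons, List.length_append, List.length_cons]
      omega

theorem iterMap_ne_nil (hne : ∀ e, f.emap e ≠ []) (t : ℕ) {l : List G.E} (h : l ≠ []) :
    f.iterMap t l ≠ [] := by
  have := f.length_le_iterMap hne t l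
  rw [← List.length_pos_iff] at h ⊢
  omega

theorem head?_iterMap (hne : ∀ e, f.emap e ≠ []) (t : ℕ) {l : List G.E} {e : G.E}
    (he : l.head? = some e) : (f.iterMap t l).head? = (f.iterMap t [e]).head? := by
  obtain ⟨r, rfl⟩ := List.head?_eq_some_iff.mp he
  rw [← List.singleton_append, iterMap_append_s16,
    List.head?_append_of_ne_nil _ (f.iterMap_ne_nil hne t (List.cons_ne_nil e []))]

theorem init_head_iterMap (hne : ∀ e, f.emap e ≠ []) (t : ℕ) {l : List G.E} {e d : G.E}
    (he : l.head? = some e) (hd : (f.iterMap t l).head? = some d) :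
    G.init d = f.vmap^[t] (G.init e) := by
  induction t generalizing l e with
  | zero =>
    rw [iterMap_zero, he, Option.some_inj] at hd
    rw [hd]
    rfl
  | succ t ih =>
    obtain ⟨e₁, he₁⟩ : ∃ e₁, (f.emap e).head? = some e₁ := ⟨_, List.head?_eq_some_head (hne e)⟩
    rw [iterMap_succ] at hd
    have hl : (f.mapPath l).head? = some e₁ := by
      simpa [iterMap, ← he₁] using f.head?_iterMap hne 1 he
    rw [ih hl hd, f.emap_head e e₁ he₁, Function.iterate_succ_apply]

end GraphMap

theorem List.IsPrefix.iterMap {G : TTGraph} {x y : List G.E} (h : x <+: y) (f : GraphMap G G)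
    (t : ℕ) : f.iterMap t x <+: f.iterMap t y := by
  obtain ⟨r, rfl⟩ := h
  exact ⟨f.iterMap t r, (f.iterMap_append_s16 t x r).symm⟩

open List

section Paths

variable {G : TTGraph}

theorem TTGraph.init_head_stripCommonPrefix [DecidableEq G.E] : ∀ {x y : List G.E},
    G.IsPath x → G.IsPath y →
    (∀ d d', x.head? = some d → y.head? = some d' → G.init d = G.init d') →
    ∀ d d', (stripCommonPrefix x y).1.head? = some d →
      (stripCommonPrefix x y).2.head? = some d' → G.init d = G.init d'
  | a :: x, b :: y, hx, hy, h => by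
    by_cases hab : a = b
    · subst hab
      simp only [stripCommonPrefix, if_true]
      refine init_head_stripCommonPrefix hx.tail hy.tail fun d d' hd hd' => ?_
      obtain ⟨x, rfl⟩ := head?_eq_some_iff.mp hd
      obtain ⟨y, rfl⟩ := head?_eq_some_iff.mp hd'
      exact ((isChain_cons_cons.mp hx).1.symm).trans (isChain_cons_cons.mp hy).1
    · simpa [stripCommonPrefix, hab] using h
  | [], y, _, _, _ => by simp
  | a :: x, [], _, _, _ => by simp

theorem Legal.infix {S : GateStruct G} {l l' : List G.E} (h : Legal G S l) (hi : l' <:+: l) :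
    Legal G S l' :=
  ⟨h.1.infix hi, h.2.infix hi⟩

theorem Legal.iterMap {S : GateStruct G} {f : GraphMap G G} (hTT : IsTT S S f) {l : List G.E}
    (h : Legal G S l) (t : ℕ) : Legal G S (f.iterMap t l) := by
  induction t with
  | zero => exact h
  | succ t ih => rw [GraphMap.iterMap_succ']; exact hTT.2 _ ih

theorem head?_ne_of_legalHeads {S : GateStruct G} {x y : List G.E} (h : LegalHeads G S x y)
    (hx : x ≠ []) : x.head? ≠ y.head? := by
  intro hxy
  exact h _ _ (head?_eq_some_head hx) (hxy ▸ head?_eq_some_head hx) (S.refl _)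

theorem IllegalLT.take {S : GateStruct G} {a b : List G.E} (hlt : IsLongTurn G S a b)
    (hill : ¬ LegalHeads G S a b) (n : ℕ) : IllegalLT G S (a.take (n + 1)) (b.take (n + 1)) := by
  obtain ⟨hL, hL', hne, hne', hhead⟩ := hlt
  simp only [LegalHeads, not_forall, not_not] at hill
  obtain ⟨d, d', hd, hd', hdd⟩ := hill
  simp only [IllegalLT, IsLongTurn, head?_take_succ]
  exact ⟨⟨hL.infix (take_prefix _ a).isInfix, hL'.infix (take_prefix _ b).isInfix,
    by simpa using hne, by simpa using hne', hhead⟩, d, d', hd, hd', hdd⟩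

end Paths

section IntrinsicGates

variable {G : TTGraph} {S : GateStruct G} {f : GraphMap G G}

/-- If `f^u(e)` and `f^u(e')` started in a common gate, then some `f^{w+u}(e)`, `f^{w+u}(e')`
would share their first edge, which would put `e` and `e'` in a common gate. -/
theorem not_rel_head_iterMap (hS : ∀ e e', S.rel e e' ↔ IntrinsicRel f e e')
    (hne : ∀ e, f.emap e ≠ []) {e e' : G.E} (hinit : G.init e = G.init e')
    (hrel : ¬ S.rel e e') (u : ℕ) {d d' : G.E}
    (hd : (f.iterMap u [e]).head? = some d) (hd' : (f.iterMap u [e']).head? = some d') :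
    ¬ S.rel d d' := by
  intro hdd
  obtain ⟨-, w, hw, c, hc, hc'⟩ := (hS d d').mp hdd
  refine hrel ((hS e e').mpr ⟨hinit, w + u, by omega, c, ?_, ?_⟩)
  · rwa [f.iterMap_add_s16, f.head?_iterMap hne w hd]
  · rwa [f.iterMap_add_s16, f.head?_iterMap hne w hd']

theorem LegalHeads.iterMap (hS : ∀ e e', S.rel e e' ↔ IntrinsicRel f e e')
    (hne : ∀ e, f.emap e ≠ []) {a b : List G.E} {e e' : G.E} (he : a.head? = some e)
    (he' : b.head? = some e') (hinit : G.init e = G.init e') (h : LegalHeads G S a b)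
    (u : ℕ) : LegalHeads G S (f.iterMap u a) (f.iterMap u b) := fun _ _ hd hd' =>
  not_rel_head_iterMap hS hne hinit (h e e' he he') u
    (f.head?_iterMap hne u he ▸ hd) (f.head?_iterMap hne u he' ▸ hd')

end IntrinsicGates

section LongTurnImages

variable {G : TTGraph} [DecidableEq G.E] {S : GateStruct G} {f : GraphMap G G}
  {γ γ' : List G.E}

def ltImage (f : GraphMap G G) (γ γ' : List G.E) (k : ℕ) : List G.E × List G.E :=
  stripCommonPrefix (f.iterMap k γ) (f.iterMap k γ')

theorem ltImage_spec (f : GraphMap G G) (γ γ' : List G.E) (k : ℕ) :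
    ∃ p, f.iterMap k γ = p ++ (ltImage f γ γ' k).1 ∧ f.iterMap k γ' = p ++ (ltImage f γ γ' k).2 :=
  stripCommonPrefix_spec _ _

theorem ltImage_add (f : GraphMap G G) (γ γ' : List G.E) (u s : ℕ) :
    ltImage f γ γ' (u + s) =
      stripCommonPrefix (f.iterMap u (ltImage f γ γ' s).1) (f.iterMap u (ltImage f γ γ' s).2) := by
  obtain ⟨p, h, h'⟩ := ltImage_spec f γ γ' s
  rw [ltImage, f.iterMap_add_s16, f.iterMap_add_s16, h, h', f.iterMap_append_s16, f.iterMap_append_s16,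
    stripCommonPrefix_append_append]

theorem ltImage_eq_of_isLTImageF {k : ℕ} {δ δ' : List G.E}
    (h : IsLTImageF (f.iterMap k) γ γ' δ δ') : ltImage f γ γ' k = (δ, δ') := by
  obtain ⟨γ₀, h, h', -, -, hne⟩ := h
  rw [ltImage, h, h', stripCommonPrefix_append_append, stripCommonPrefix_of_head?_ne hne]

theorem ltImage_ne_nil_of_le {m k : ℕ} (hmk : m ≤ k) (h : (ltImage f γ γ' k).1 ≠ [])
    (h' : (ltImage f γ γ' k).2 ≠ []) :
    (ltImage f γ γ' m).1 ≠ [] ∧ (ltImage f γ γ' m).2 ≠ [] := by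
  obtain ⟨u, rfl⟩ := Nat.exists_eq_add_of_le' hmk
  rw [ltImage_add] at h h'
  constructor <;> intro hnil <;> simp [hnil] at h h'

theorem isLongTurn_ltImage (hTT : IsTT S S f) (hlt : IsLongTurn G S γ γ') (k : ℕ)
    (h : (ltImage f γ γ' k).1 ≠ []) (h' : (ltImage f γ γ' k).2 ≠ []) :
    IsLongTurn G S (ltImage f γ γ' k).1 (ltImage f γ γ' k).2 := by
  obtain ⟨hL, hL', hne, hne', hhead⟩ := hlt
  obtain ⟨p, hp, hp'⟩ := ltImage_spec f γ γ' k
  have hA := hL.iterMap hTT k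
  have hB := hL'.iterMap hTT k
  refine ⟨hA.infix (hp ▸ suffix_append p _).isInfix, hB.infix (hp' ▸ suffix_append p _).isInfix,
    h, h', fun d d' hd hd' => ⟨?_, ?_⟩⟩
  · refine TTGraph.init_head_stripCommonPrefix hA.1 hB.1 (fun c c' hc hc' => ?_) d d' hd hd'
    have he := head?_eq_some_head hne
    have he' := head?_eq_some_head hne'
    rw [f.init_head_iterMap hTT.1 k he hc, f.init_head_iterMap hTT.1 k he' hc',
      (hhead _ _ he he').1]
  · rintro rfl
    exact head?_stripCommonPrefix_ne h (hd.trans hd'.symm)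

/-- By `LegalHeads.iterMap`, the images of the two branches never cancel against each other. -/
theorem legalHeads_ltImage_of_le (hS : ∀ e e', S.rel e e' ↔ IntrinsicRel f e e')
    (hTT : IsTT S S f) (hlt : IsLongTurn G S γ γ') {s k : ℕ} (hsk : s ≤ k)
    (h : (ltImage f γ γ' s).1 ≠ []) (h' : (ltImage f γ γ' s).2 ≠ [])
    (hlegal : LegalHeads G S (ltImage f γ γ' s).1 (ltImage f γ γ' s).2) :
    LegalHeads G S (ltImage f γ γ' k).1 (ltImage f γ γ' k).2 := by
  obtain ⟨u, rfl⟩ := Nat.exists_eq_add_of_le' hsk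
  obtain ⟨-, -, -, -, hhead⟩ := isLongTurn_ltImage hTT hlt s h h'
  have he := head?_eq_some_head h
  have he' := head?_eq_some_head h'
  have hu := hlegal.iterMap hS hTT.1 he he' (hhead _ _ he he').1 u
  rwa [ltImage_add,
    stripCommonPrefix_of_head?_ne (head?_ne_of_legalHeads hu (f.iterMap_ne_nil hTT.1 u h))]

end LongTurnImages

section Iterates

variable {G : TTGraph} {S : GateStruct G} {f : GraphMap G G}

theorem GraphMap.exists_length_mapPath_le (f : GraphMap G G) :
    ∃ M, ∀ l, (f.mapPath l).length ≤ M * l.length := by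
  let := G.fintE
  refine ⟨Finset.univ.sup fun e => (f.emap e).length, fun l => ?_⟩
  induction l with
  | nil => simp
  | cons e l ih =>
    have := Finset.le_sup (f := fun e => (f.emap e).length) (Finset.mem_univ e)
    rw [f.mapPath_cons, length_append, length_cons, Nat.mul_succ]
    omega

theorem exists_two_mul_length_le_iterMap (hne : ∀ e, f.emap e ≠ []) (hexp : ExpandingTT f) :
    ∃ T, 1 ≤ T ∧ ∀ l, 2 * l.length ≤ (f.iterMap T l).length := by
  let := G.fintE
  choose t _ ht using hexp
  set T := Finset.univ.sup t + 1
  have hedge (e : G.E) : 2 ≤ (f.iterMap T [e]).length := by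
    have : t e ≤ T := Nat.le_succ_of_le (Finset.le_sup (Finset.mem_univ e))
    rw [← Nat.sub_add_cancel this, f.iterMap_add_s16]
    exact (ht e).trans (f.length_le_iterMap hne _ _)
  refine ⟨T, by omega, fun l => ?_⟩
  induction l with
  | nil => simp
  | cons e l ih =>
    rw [← singleton_append, f.iterMap_append_s16, length_append, length_append, length_singleton]
    have := hedge e
    omega

/-- As `f^T` doubles lengths, the image of the truncated branch is long enough to contain `σ`
followed by `C` edges. -/
theorem prefix_iterMap_take {T : ℕ} (hdb : ∀ l, 2 * l.length ≤ (f.iterMap T l).length) {C : ℕ}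
    {a w σ : List G.E} (hσ : σ.length ≤ C) (hw : f.iterMap T a = σ ++ w) :
    σ ++ w.take C <+: f.iterMap T (a.take C) := by
  have hpre : σ ++ w.take C <+: σ ++ w := (prefix_append_right_inj σ).mpr (take_prefix C w)
  by_cases hlen : a.length ≤ C
  · rwa [take_of_length_le hlen, hw]
  · refine prefix_of_prefix_length_le (hw ▸ hpre) ((take_prefix C a).iterMap f T) ?_
    have := hdb (a.take C)
    rw [length_take_of_le (by omega)] at this
    rw [length_append]
    have := length_take_le C w
    omega

variable [DecidableEq G.E]

/-- Writing `f^k γ = P ++ a`, `f^k γ' = P ++ b` with `(a, b)` the `f^k`-image, a common prefix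
of `f^{k+1} γ` and `f^{k+1} γ'` consists of at most `f P` and a common prefix of `f a`, `f b`. -/
theorem CancelBoundF.iterMap {Cb : ℕ} (hTT : IsTT S S f) (hCb : CancelBoundF S f.mapPath Cb)
    (k : ℕ) : ∃ c, CancelBoundF S (f.iterMap k) c := by
  obtain ⟨M, hM⟩ := f.exists_length_mapPath_le
  induction k with
  | zero =>
    refine ⟨0, fun γ γ' hlt p hp hp' => ?_⟩
    rcases p with _ | ⟨x, p⟩
    · rfl
    · have hhead : ∀ {l : List G.E}, x :: p <+: l → l.head? = some x := fun ⟨_, hl⟩ => hl ▸ rfl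
      exact absurd rfl (hlt.2.2.2.2 x x (hhead hp) (hhead hp')).2
  | succ k ih =>
    obtain ⟨c, hc⟩ := ih
    refine ⟨M * c + Cb, fun γ γ' hlt p hp hp' => ?_⟩
    obtain ⟨P, hA, hB⟩ := ltImage_spec f γ γ' k
    have hP : P.length ≤ c := hc γ γ' hlt P (hA ▸ prefix_append P _) (hB ▸ prefix_append P _)
    rw [f.iterMap_succ', hA, f.mapPath_append_s16] at hp
    rw [f.iterMap_succ', hB, f.mapPath_append_s16] at hp'
    have hcancel : ∀ q, q <+: f.mapPath (ltImage f γ γ' k).1 →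
        q <+: f.mapPath (ltImage f γ γ' k).2 → q.length ≤ Cb := by
      intro q hq hq'
      by_cases ha : (ltImage f γ γ' k).1 = []
      · rw [ha] at hq
        simp [prefix_nil.mp hq]
      by_cases hb : (ltImage f γ γ' k).2 = []
      · rw [hb] at hq'
        simp [prefix_nil.mp hq']
      exact hCb _ _ (isLongTurn_ltImage hTT hlt k ha hb) q hq hq'
    calc p.length ≤ (f.mapPath P).length + Cb := length_le_add_of_prefix_append hp hp' hcancel
      _ ≤ M * c + Cb := by gcongr; exact (hM P).trans (Nat.mul_le_mul_left M hP)

end Iterates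

section PeriodicINP

variable {G : TTGraph} {S : GateStruct G} {f : GraphMap G G}

/-- `HasPeriodicINP S f` says that `MapsOver f t p p` for some illegal long turn `p` and `t ≥ 1`. -/
def MapsOver (f : GraphMap G G) (t : ℕ) (p q : List G.E × List G.E) : Prop :=
  ∃ σ, σ ++ q.1 <+: f.iterMap t p.1 ∧ σ ++ q.2 <+: f.iterMap t p.2

theorem MapsOver.trans {t u : ℕ} {p q r : List G.E × List G.E} (hpq : MapsOver f t p q)
    (hqr : MapsOver f u q r) : MapsOver f (u + t) p r := by
  obtain ⟨σ, h₁, h₂⟩ := hpq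
  obtain ⟨τ, h₁', h₂'⟩ := hqr
  have key : ∀ {x y z : List G.E}, σ ++ y <+: f.iterMap t x → τ ++ z <+: f.iterMap u y →
      (f.iterMap u σ ++ τ) ++ z <+: f.iterMap (u + t) x := fun hx hy => by
    rw [f.iterMap_add_s16, append_assoc]
    exact ((prefix_append_right_inj _).mpr hy).trans (f.iterMap_append_s16 u σ _ ▸ hx.iterMap f u)
  exact ⟨_, key h₁ h₁', key h₂ h₂'⟩

theorem MapsOver.iterate {t : ℕ} {p : List G.E × List G.E} (h : MapsOver f t p p) :
    ∀ n, MapsOver f (n * t) p p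
  | 0 => ⟨[], by simp, by simp⟩
  | n + 1 => by rw [Nat.succ_mul, add_comm]; exact (h.iterate n).trans h

theorem not_legalizingF_of_mapsOver {γ γ' : List G.E} {k : ℕ} (hill : IllegalLT G S γ γ')
    (h : MapsOver f k (γ, γ') (γ, γ')) : ¬ LegalizingF S S (f.iterMap k) := by
  intro hleg
  obtain ⟨σ, ⟨r, hr⟩, ⟨r', hr'⟩⟩ := h
  obtain ⟨⟨-, -, hne, hne', hhead⟩, d, d', hd, hd', hdd⟩ := id hill
  have hd₁ : (γ ++ r).head? = some d := by rwa [head?_append_of_ne_nil _ hne]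
  have hd₁' : (γ' ++ r').head? = some d' := by rwa [head?_append_of_ne_nil _ hne']
  have hI : IsLTImageF (f.iterMap k) γ γ' (γ ++ r) (γ' ++ r') :=
    ⟨σ, by simp [← hr], by simp [← hr'], by simp [hne], by simp [hne'],
      by simpa [hd₁, hd₁'] using (hhead d d' hd hd').2⟩
  exact hleg γ γ' _ _ hill hI d d' hd₁ hd₁' hdd

theorem not_eventually_legalizingF_of_hasPeriodicINP (h : HasPeriodicINP S f) :
    ¬ ∃ k₀, ∀ k, k₀ ≤ k → LegalizingF S S (f.iterMap k) := by
  rintro ⟨k₀, hk₀⟩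
  obtain ⟨γ, γ', ρ, t, ht, hill, hρ, hρ'⟩ := h
  have hover : MapsOver f t (γ, γ') (γ, γ') := ⟨ρ, hρ, hρ'⟩
  exact not_legalizingF_of_mapsOver hill (hover.iterate k₀) (hk₀ _ (Nat.le_mul_of_pos_right k₀ ht))

end PeriodicINP

theorem Set.Finite.exists_lt_map_eq_of_forall_le_ncard {β : Type*} {A : Set β} (hA : A.Finite)
    {g : ℕ → β} (hg : ∀ j ≤ A.ncard, g j ∈ A) : ∃ i j, i < j ∧ j ≤ A.ncard ∧ g i = g j := by
  obtain ⟨i, hi, j, hj, hij, heq⟩ :=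
    Finset.exists_ne_map_eq_of_card_lt_of_maps_to (s := Finset.range (A.ncard + 1))
      (t := hA.toFinset) (by simp [Set.ncard_eq_toFinset_card A hA])
      (fun j hj => by simpa using hg j (Nat.lt_succ_iff.mp (Finset.mem_range.mp hj)))
  rw [Finset.mem_range, Nat.lt_succ_iff] at hi hj
  rcases hij.lt_or_gt with h | h
  exacts [⟨i, j, h, hj, heq⟩, ⟨j, i, h, hi, heq.symm⟩]

section Pigeonhole

variable {G : TTGraph} [DecidableEq G.E] {S : GateStruct G} {f : GraphMap G G}
  {γ γ' : List G.E} {T L : ℕ}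

theorem mapsOver_take_ltImage (hTT : IsTT S S f)
    (hdb : ∀ l, 2 * l.length ≤ (f.iterMap T l).length) (hL : CancelBoundF S (f.iterMap T) L)
    (hlt : IsLongTurn G S γ γ') {s : ℕ} (h : (ltImage f γ γ' s).1 ≠ [])
    (h' : (ltImage f γ γ' s).2 ≠ []) :
    MapsOver f T ((ltImage f γ γ' s).map (take (L + 1)) (take (L + 1)))
      ((ltImage f γ γ' (T + s)).map (take (L + 1)) (take (L + 1))) := by
  obtain ⟨σ, hσ, hσ'⟩ := stripCommonPrefix_spec (f.iterMap T (ltImage f γ γ' s).1)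
    (f.iterMap T (ltImage f γ γ' s).2)
  have hlen : σ.length ≤ L + 1 := Nat.le_succ_of_le <|
    hL _ _ (isLongTurn_ltImage hTT hlt s h h') σ (hσ ▸ prefix_append σ _) (hσ' ▸ prefix_append σ _)
  rw [← ltImage_add] at hσ hσ'
  exact ⟨σ, prefix_iterMap_take hdb hlen hσ, prefix_iterMap_take hdb hlen hσ'⟩

theorem mapsOver_take_ltImage_mul (hTT : IsTT S S f)
    (hdb : ∀ l, 2 * l.length ≤ (f.iterMap T l).length) (hL : CancelBoundF S (f.iterMap T) L)
    (hlt : IsLongTurn G S γ γ') (s n : ℕ) (h : (ltImage f γ γ' (s + n * T)).1 ≠ [])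
    (h' : (ltImage f γ γ' (s + n * T)).2 ≠ []) :
    MapsOver f (n * T) ((ltImage f γ γ' s).map (take (L + 1)) (take (L + 1)))
      ((ltImage f γ γ' (s + n * T)).map (take (L + 1)) (take (L + 1))) := by
  induction n with
  | zero => exact ⟨[], by simp, by simp⟩
  | succ n ih =>
    have hstage : s + (n + 1) * T = T + (s + n * T) := by ring
    rw [hstage] at h h' ⊢
    obtain ⟨hn, hn'⟩ := ltImage_ne_nil_of_le (Nat.le_add_left _ T) h h'
    rw [Nat.succ_mul, add_comm]
    exact (ih hn hn').trans (mapsOver_take_ltImage hTT hdb hL hlt hn hn')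

theorem hasPeriodicINP_of_forall_not_legalHeads (hTT : IsTT S S f) (hT : 1 ≤ T)
    (hdb : ∀ l, 2 * l.length ≤ (f.iterMap T l).length) (hL : CancelBoundF S (f.iterMap T) L)
    (hlt : IsLongTurn G S γ γ') {k : ℕ}
    (hk : {q : List G.E × List G.E | q.1.length ≤ L + 1 ∧ q.2.length ≤ L + 1}.ncard * T ≤ k)
    (h : (ltImage f γ γ' k).1 ≠ []) (h' : (ltImage f γ γ' k).2 ≠ [])
    (hill : ∀ s ≤ k, ¬ LegalHeads G S (ltImage f γ γ' s).1 (ltImage f γ γ' s).2) :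
    HasPeriodicINP S f := by
  let := G.fintE
  have hA := (finite_length_le G.E (L + 1)).prod (finite_length_le G.E (L + 1))
  obtain ⟨i, j, hij, hjN, heq⟩ := hA.exists_lt_map_eq_of_forall_le_ncard
    (g := fun j => (ltImage f γ γ' (j * T)).map (take (L + 1)) (take (L + 1)))
    (fun j _ => ⟨length_take_le _ _, length_take_le _ _⟩)
  have hjk : j * T ≤ k := (Nat.mul_le_mul_right T hjN).trans hk
  have hik : i * T ≤ k := (Nat.mul_le_mul_right T hij.le).trans hjk
  have hstage : i * T + (j - i) * T = j * T := by
    rw [← Nat.add_mul, Nat.add_sub_cancel' hij.le]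
  obtain ⟨hi, hi'⟩ := ltImage_ne_nil_of_le hik h h'
  obtain ⟨hj, hj'⟩ := ltImage_ne_nil_of_le hjk h h'
  have hover := mapsOver_take_ltImage_mul hTT hdb hL hlt (i * T) (j - i)
    (hstage ▸ hj) (hstage ▸ hj')
  rw [hstage, ← heq] at hover
  obtain ⟨σ, hσ, hσ'⟩ := hover
  exact ⟨_, _, σ, (j - i) * T, Nat.mul_pos (Nat.sub_pos_of_lt hij) hT,
    IllegalLT.take (isLongTurn_ltImage hTT hlt _ hi hi') (hill _ hik) L, hσ, hσ'⟩

end Pigeonhole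

theorem eventually_legalizingF_of_not_hasPeriodicINP {G : TTGraph} {S : GateStruct G}
    {f : GraphMap G G} (hTT : IsTT S S f) (hS : ∀ e e', S.rel e e' ↔ IntrinsicRel f e e')
    (hexp : ExpandingTT f) (hCb : ∃ Cb, CancelBoundF S f.mapPath Cb)
    (hINP : ¬ HasPeriodicINP S f) :
    ∃ k₀, ∀ k, k₀ ≤ k → LegalizingF S S (f.iterMap k) := by
  classical
  obtain ⟨Cb, hCb⟩ := hCb
  obtain ⟨T, hT, hdb⟩ := exists_two_mul_length_le_iterMap hTT.1 hexp
  obtain ⟨L, hL⟩ := hCb.iterMap hTT T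
  refine ⟨{q : List G.E × List G.E | q.1.length ≤ L + 1 ∧ q.2.length ≤ L + 1}.ncard * T,
    fun k hk γ γ' δ δ' hill hI => ?_⟩
  have hδ := ltImage_eq_of_isLTImageF hI
  obtain ⟨-, -, -, hne, hne', -⟩ := hI
  obtain rfl : (ltImage f γ γ' k).1 = δ := by rw [hδ]
  obtain rfl : (ltImage f γ γ' k).2 = δ' := by rw [hδ]
  by_contra hδill
  refine hINP (hasPeriodicINP_of_forall_not_legalHeads hTT hT hdb hL hill.1 hk hne hne'
    fun s hs hlegal => hδill ?_)
  obtain ⟨hs₁, hs₂⟩ := ltImage_ne_nil_of_le hs hne hne'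
  exact legalHeads_ltImage_of_le hS hTT hill.1 hs hs₁ hs₂ hlegal

/-- for an expanding train track map `f` representing an
automorphism of `F_N` (whence possessing a cancellation bound), exactly one of
the following holds: (a) `f` possesses a periodic INP, or (b) all sufficiently
high powers of `f` are legalizing with respect to the intrinsic gate structure
`G(f)` (here `S` is the intrinsic gate structure). -/
theorem INP_alternative {G : TTGraph} (S : GateStruct G) (f : GraphMap G G)
    (hTT : IsTT S S f)
    (hS : ∀ e e', S.rel e e' ↔ IntrinsicRel f e e')
    (hexp : ExpandingTT f)
    (hCb : ∃ Cb, CancelBoundF S f.mapPath Cb) :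
    Xor' (HasPeriodicINP S f)
      (∃ k₀, ∀ k, k₀ ≤ k → LegalizingF S S (f.iterMap k)) :=
  xor_iff_iff_not.mpr ⟨not_eventually_legalizingF_of_hasPeriodicINP,
    not_imp_comm.mp (eventually_legalizingF_of_not_hasPeriodicINP hTT hS hexp hCb)⟩
end
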